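/- arXiv:0805.3901 — 4 statements merged into one kernel-verified Lean document; each statement's English description precedes it below -/
import Mathlib

section
/- The SP-gadget satisfies properties P1–P4: its vertex set contains the vertices x_q for q in S; it has a perfect matching; for each pair p ≠ q in S, the graph obtained by deleting x_p and x_q, if non-empty, has a perfect matching; and for each subset L of S with |L| ≥ 3, the graph obtained by deleting {x_l : l ∈ L}, if non-empty, has no perfect matching. -/
/-- Vertex set of the SP-gadget for colour set `α`: the vertices `x_i` (`Sum.inl i`),
the vertices `x'_i` (`Sum.inr (Sum.inl i)`), and `x''_a, x''_b`
(`Sum.inr (Sum.inr false)`, `Sum.inr (Sum.inr true)`). -/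
abbrev SPVert (α : Type*) : Type _ := α ⊕ α ⊕ Bool

/-- The SP-gadget (Szeider): edges `x''_a x''_b`, `x'_i x''_a`, `x'_i x''_b` and
`x_i x'_i` for all `i`. -/
def spGadget (α : Type*) : SimpleGraph (SPVert α) :=
  SimpleGraph.fromRel (fun a b =>
    match a, b with
    | Sum.inl i, Sum.inr (Sum.inl j) => i = j
    | Sum.inr (Sum.inl _), Sum.inr (Sum.inr _) => True
    | Sum.inr (Sum.inr u), Sum.inr (Sum.inr w) => u ≠ w
    | _, _ => False)

namespace SimpleGraph

open Finset

variable {V : Type*} {G : SimpleGraph V}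

theorem exists_isPerfectMatching_of_involution (f : V → V) (hadj : ∀ v, G.Adj v (f v))
    (hinv : Function.Involutive f) : ∃ M : G.Subgraph, M.IsPerfectMatching := by
  refine ⟨⟨Set.univ, fun v w => f v = w, fun h => h ▸ hadj _, fun _ => trivial,
    ⟨fun v w h => h ▸ hinv v⟩⟩, ?_⟩
  rw [Subgraph.isPerfectMatching_iff]
  exact fun v => ⟨f v, rfl, fun w (hw : f v = w) => hw.symm⟩

theorem exists_isPerfectMatching_induce_of_involution {s : Set V} (f : V → V)
    (hf : Set.MapsTo f s s) (hadj : ∀ v ∈ s, G.Adj v (f v)) (hinv : ∀ v ∈ s, f (f v) = v) :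
    ∃ M : (G.induce s).Subgraph, M.IsPerfectMatching :=
  exists_isPerfectMatching_of_involution (hf.restrict f s s) (fun v => hadj v v.2)
    (fun v => Subtype.ext (hinv v v.2))

theorem Subgraph.IsPerfectMatching.card_le_card_of_neighborSet_subset {M : G.Subgraph}
    (hM : M.IsPerfectMatching) {s t : Finset V} (hst : ∀ v ∈ s, G.neighborSet v ⊆ t) :
    #s ≤ #t := by
  choose f hf using fun v => (Subgraph.isPerfectMatching_iff.1 hM v).exists
  refine card_le_card_of_injOn f (fun v hv => hst v hv (M.adj_sub (hf v))) ?_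
  intro v _ w _ hvw
  exact hM.1.eq_of_adj_right (hf v) (hvw ▸ hf w)

end SimpleGraph

namespace spGadget

open Finset SimpleGraph

variable {α : Type*}

theorem adj_inr_inl_iff {i : α} {w : SPVert α} :
    (spGadget α).Adj (.inr (.inl i)) w ↔ w = .inl i ∨ ∃ b, w = .inr (.inr b) := by
  rcases w with j | j | b <;> simp [spGadget, eq_comm]

def partner : SPVert α → SPVert α
  | .inl i => .inr (.inl i)
  | .inr (.inl i) => .inl i
  | .inr (.inr b) => .inr (.inr !b)

theorem adj_partner (v : SPVert α) : (spGadget α).Adj v (partner v) := by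
  rcases v with i | i | b <;> simp [spGadget, partner]

theorem partner_involutive : Function.Involutive (partner (α := α)) := by
  rintro (i | i | b) <;> simp [partner]

theorem exists_isPerfectMatching : ∃ M : (spGadget α).Subgraph, M.IsPerfectMatching :=
  exists_isPerfectMatching_of_involution partner adj_partner partner_involutive

/-- Once `x_l` is deleted, `x'_l` can only be matched to one of the two hubs `x''_a, x''_b`,
and there are at least three such `l`. -/
theorem induce_not_exists_isPerfectMatching {L : Finset α} (hL : 3 ≤ #L) :
    ¬ ∃ M : ((spGadget α).induce {v | ∀ l ∈ L, v ≠ .inl l}).Subgraph,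
      M.IsPerfectMatching := by
  set S : Set (SPVert α) := {v | ∀ l ∈ L, v ≠ .inl l}
  have mem_inr (v : α ⊕ Bool) : (.inr v : SPVert α) ∈ S := fun _ _ => Sum.inr_ne_inl
  let hub : Bool ↪ S := ⟨fun b => ⟨.inr (.inr b), mem_inr _⟩, fun _ _ h => by simpa using h⟩
  let primed : α ↪ S := ⟨fun l => ⟨.inr (.inl l), mem_inr _⟩, fun _ _ h => by simpa using h⟩
  rintro ⟨M, hM⟩
  have hcard := hM.card_le_card_of_neighborSet_subset (s := L.map primed) (t := univ.map hub) ?_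
  · simp only [card_map, card_univ, Fintype.card_bool] at hcard
    omega
  · simp only [mem_map]
    rintro _ ⟨l, hl, rfl⟩ ⟨w, hw⟩ hadj
    rcases adj_inr_inl_iff.1 hadj with rfl | ⟨b, rfl⟩
    · exact absurd rfl (hw l hl)
    · exact mem_map_of_mem hub (mem_univ b)

variable [DecidableEq α] {p q : α}

/-- The hubs `x''_a, x''_b` take over the partners `x'_p, x'_q` of the deleted `x_p, x_q`. -/
def partnerAvoiding (p q : α) : SPVert α → SPVert α
  | .inl i => .inr (.inl i)
  | .inr (.inl i) => if i = p then .inr (.inr false) else if i = q then .inr (.inr true) else .inl i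
  | .inr (.inr false) => .inr (.inl p)
  | .inr (.inr true) => .inr (.inl q)

theorem partnerAvoiding_ne (v : SPVert α) :
    partnerAvoiding p q v ≠ .inl p ∧ partnerAvoiding p q v ≠ .inl q := by
  rcases v with i | i | (_ | _) <;> simp only [partnerAvoiding] <;> try split_ifs
  all_goals simp_all

theorem adj_partnerAvoiding (v : SPVert α) : (spGadget α).Adj v (partnerAvoiding p q v) := by
  rcases v with i | i | (_ | _) <;> simp [partnerAvoiding, spGadget]
  split_ifs <;> simp

theorem partnerAvoiding_partnerAvoiding (hpq : p ≠ q) {v : SPVert α}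
    (hv : v ≠ .inl p ∧ v ≠ .inl q) : partnerAvoiding p q (partnerAvoiding p q v) = v := by
  rcases v with i | i | (_ | _) <;> simp only [partnerAvoiding] <;> try split_ifs
  all_goals simp_all

theorem induce_exists_isPerfectMatching (hpq : p ≠ q) :
    ∃ M : ((spGadget α).induce {v | v ≠ .inl p ∧ v ≠ .inl q}).Subgraph,
      M.IsPerfectMatching :=
  exists_isPerfectMatching_induce_of_involution (partnerAvoiding p q)
    (fun v _ => partnerAvoiding_ne v) (fun v _ => adj_partnerAvoiding v)
    (fun _ hv => partnerAvoiding_partnerAvoiding hpq hv)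

end spGadget

theorem spGadget_is_P_gadget_general (α : Type*) :
    Function.Injective (Sum.inl : α → SPVert α) ∧
    (∃ M : (spGadget α).Subgraph, M.IsPerfectMatching) ∧
    (∀ p q : α, p ≠ q →
      (Nonempty ↥{v : SPVert α | v ≠ Sum.inl p ∧ v ≠ Sum.inl q} →
        ∃ M : ((spGadget α).induce {v : SPVert α | v ≠ Sum.inl p ∧ v ≠ Sum.inl q}).Subgraph,
          M.IsPerfectMatching)) ∧
    (∀ L : Finset α, 3 ≤ L.card →
      (Nonempty ↥{v : SPVert α | ∀ l ∈ L, v ≠ Sum.inl l} →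
        ¬ ∃ M : ((spGadget α).induce {v : SPVert α | ∀ l ∈ L, v ≠ Sum.inl l}).Subgraph,
          M.IsPerfectMatching)) := by
  classical
  exact ⟨Sum.inl_injective, spGadget.exists_isPerfectMatching,
    fun _ _ hpq _ => spGadget.induce_exists_isPerfectMatching hpq,
    fun _ hL _ => spGadget.induce_not_exists_isPerfectMatching hL⟩

/-- The SP-gadget satisfies properties P1–P4 of a P-gadget:
(P1) it contains the distinguished vertices `x_q`, `q ∈ S` (they are pairwise distinct);
(P2) it has a perfect matching;
(P3) deleting `x_p, x_q` for `p ≠ q` leaves a graph which, if non-empty, has a perfect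
matching; (P4) deleting `x_l` for all `l` in a set `L` with `|L| ≥ 3` leaves a graph
which, if non-empty, has no perfect matching. -/
theorem spGadget_is_P_gadget (α : Type*) [Fintype α] [DecidableEq α]
    (hcard : 2 ≤ Fintype.card α) :
    Function.Injective (Sum.inl : α → SPVert α) ∧
    (∃ M : (spGadget α).Subgraph, M.IsPerfectMatching) ∧
    (∀ p q : α, p ≠ q →
      (Nonempty ↥{v : SPVert α | v ≠ Sum.inl p ∧ v ≠ Sum.inl q} →
        ∃ M : ((spGadget α).induce {v : SPVert α | v ≠ Sum.inl p ∧ v ≠ Sum.inl q}).Subgraph,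
          M.IsPerfectMatching)) ∧
    (∀ L : Finset α, 3 ≤ L.card →
      (Nonempty ↥{v : SPVert α | ∀ l ∈ L, v ≠ Sum.inl l} →
        ¬ ∃ M : ((spGadget α).induce {v : SPVert α | ∀ l ∈ L, v ≠ Sum.inl l}).Subgraph,
          M.IsPerfectMatching)) :=
  spGadget_is_P_gadget_general α
end

section
/- Colour-connectivity is an equivalence relation on the vertex set of a c-edge-coloured complete graph K^c_n (where each vertex is defined to be colour-connected to itself). -/
def IsPCPath {V σ : Type*} (G : σ → SimpleGraph V) (k : ℕ)
    (v : Fin (k + 1) → V) (col : Fin k → σ) : Prop :=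
  Function.Injective v ∧
    (∀ i : Fin k, (G (col i)).Adj (v i.castSucc) (v i.succ)) ∧
    ∀ i j : Fin k, (j : ℕ) = (i : ℕ) + 1 → col i ≠ col j

/-- `x` and `y` are colour-connected: there are properly coloured `(x,y)`-paths `P`, `Q`
whose first edges have different colours and whose last edges have different colours. -/
def ColourConn {V σ : Type*} (G : σ → SimpleGraph V) (x y : V) : Prop :=
  ∃ (k₁ k₂ : ℕ) (h₁ : 0 < k₁) (h₂ : 0 < k₂)
    (v₁ : Fin (k₁ + 1) → V) (c₁ : Fin k₁ → σ)
    (v₂ : Fin (k₂ + 1) → V) (c₂ : Fin k₂ → σ),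
    IsPCPath G k₁ v₁ c₁ ∧ IsPCPath G k₂ v₂ c₂ ∧
    v₁ 0 = x ∧ v₁ (Fin.last k₁) = y ∧ v₂ 0 = x ∧ v₂ (Fin.last k₂) = y ∧
    c₁ ⟨0, h₁⟩ ≠ c₂ ⟨0, h₂⟩ ∧
    c₁ ⟨k₁ - 1, Nat.sub_lt h₁ Nat.one_pos⟩ ≠ c₂ ⟨k₂ - 1, Nat.sub_lt h₂ Nat.one_pos⟩

/-!
Symmetry is path reversal. For transitivity let `x ~ y ~ z` with `x ≠ z`, suppose `x ≁ z`, and let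
`e` be a colour of the edge `xz`. Comparing properly coloured `(x,z)`-paths with the edge `xz` shows
that they all start in colour `e` or all end in colour `e`; by reversal, assume the former. Then,
by completeness, every properly coloured path `T` from `x` that avoids `z` and does not start in
`e` enters its last vertex `w` in the colour of the edge `wz`: otherwise `T` followed by `wz` would
be an `(x,z)`-path not starting in `e`. Now take such a `T` ending at `y` and walk along a
`(y,z)`-path whose first colour differs from the last colour of `T`, keeping `T` properly joined to
the rest of the walk. Each new vertex either extends `T`, or lies on `T`; then `T` can be cut back
to it, or else the new edge is a chord by which `w` is entered in a second colour, contradicting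
the rule. Reaching `z` contradicts the rule directly.
-/

theorem forall_fst_eq_or_forall_snd_eq {α β : Type*} {P : α → β → Prop} {a₀ : α} {b₀ : β}
    (h₀ : P a₀ b₀) (h : ∀ a b a' b', P a b → P a' b' → a = a' ∨ b = b') :
    (∀ a b, P a b → a = a₀) ∨ (∀ a b, P a b → b = b₀) := by
  by_contra! ⟨⟨a, b, hab, ha⟩, ⟨a', b', hab', hb'⟩⟩
  have hb : b = b₀ := (h _ _ _ _ hab h₀).resolve_left ha
  have ha' : a' = a₀ := (h _ _ _ _ hab' h₀).resolve_right hb'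
  rcases h _ _ _ _ hab hab' with rfl | rfl
  exacts [ha ha', hb' hb]

theorem isChain_ne_append_singleton {σ : Type*} {a : σ} {l₁ l₂ : List σ} (h₁ : l₁.IsChain (· ≠ ·))
    (h₂ : (a :: l₂).IsChain (· ≠ ·)) (h : ¬ (l₁ ++ l₂).IsChain (· ≠ ·)) :
    (l₁ ++ [a]).IsChain (· ≠ ·) := by
  rw [List.isChain_append] at h ⊢
  rw [List.isChain_cons] at h₂
  refine ⟨h₁, List.isChain_singleton a, fun c hc d hd => ?_⟩
  obtain rfl : d = a := by simpa using hd.symm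
  push Not at h
  obtain ⟨c', hc', d', hd', rfl⟩ := h h₁ h₂.2
  obtain rfl : c = c' := Option.some_injective _ (hc.symm.trans hc')
  exact (h₂.1 c hd').symm

namespace ColourConn

variable {V σ : Type*}

-- A walk from `x` is encoded by the list of its steps `(colour of the edge taken, vertex reached)`.
def support (x : V) (L : List (σ × V)) : List V := x :: L.map Prod.snd

def endpoint (x : V) (L : List (σ × V)) : V := (L.map Prod.snd).getLastD x

def IsWalk (G : σ → SimpleGraph V) : V → List (σ × V) → Prop
  | _, [] => True
  | x, (a, y) :: L => (G a).Adj x y ∧ IsWalk G y L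

def IsPath (G : σ → SimpleGraph V) (x : V) (L : List (σ × V)) : Prop :=
  IsWalk G x L ∧ (support x L).Nodup

def reverseSteps (x : V) : List (σ × V) → List (σ × V)
  | [] => []
  | (a, y) :: L => reverseSteps y L ++ [(a, x)]

variable {G : σ → SimpleGraph V} {x y z : V} {a b : σ} {L M : List (σ × V)}

@[simp] theorem support_cons : support x ((a, y) :: L) = x :: support y L := rfl

theorem support_append : support x (L ++ M) = support x L ++ M.map Prod.snd := by
  simp [support]

@[simp] theorem endpoint_nil : endpoint x ([] : List (σ × V)) = x := rfl

@[simp] theorem endpoint_cons : endpoint x ((a, y) :: L) = endpoint y L := List.getLastD_cons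

theorem endpoint_append : endpoint x (L ++ M) = endpoint (endpoint x L) M := by
  simp only [endpoint, List.map_append, List.getLastD_eq_getLast?, List.getLast?_append]
  cases (M.map Prod.snd).getLast? <;> rfl

theorem getLast_support : (support x L).getLast (List.cons_ne_nil _ _) = endpoint x L :=
  List.getLast_eq_getLastD _

theorem endpoint_mem_support : endpoint x L ∈ support x L := List.getLastD_mem_cons

@[simp] theorem isWalk_nil : IsWalk G x [] := trivial

@[simp] theorem isWalk_cons : IsWalk G x ((a, y) :: L) ↔ (G a).Adj x y ∧ IsWalk G y L := Iff.rfl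

theorem isWalk_append : IsWalk G x (L ++ M) ↔ IsWalk G x L ∧ IsWalk G (endpoint x L) M := by
  induction L generalizing x with
  | nil => simp
  | cons p L ih => obtain ⟨a, y⟩ := p; simp [ih, and_assoc]

theorem map_fst_reverseSteps : (reverseSteps x L).map Prod.fst = (L.map Prod.fst).reverse := by
  induction L generalizing x with
  | nil => rfl
  | cons p L ih => obtain ⟨a, y⟩ := p; simp [reverseSteps, ih]

theorem support_reverseSteps :
    support (endpoint x L) (reverseSteps x L) = (support x L).reverse := by
  induction L generalizing x with
  | nil => rfl
  | cons p L ih =>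
    obtain ⟨a, y⟩ := p
    simp [reverseSteps, support_append, ih]

theorem endpoint_reverseSteps : endpoint (endpoint x L) (reverseSteps x L) = x := by
  induction L generalizing x with
  | nil => rfl
  | cons p L ih => obtain ⟨a, y⟩ := p; simp [reverseSteps, endpoint_append, ih]

theorem IsWalk.reverse (h : IsWalk G x L) : IsWalk G (endpoint x L) (reverseSteps x L) := by
  induction L generalizing x with
  | nil => trivial
  | cons p L ih =>
    obtain ⟨a, y⟩ := p
    simpa [reverseSteps, isWalk_append, endpoint_reverseSteps] using ⟨ih h.2, h.1.symm⟩

theorem IsPath.reverse (h : IsPath G x L) : IsPath G (endpoint x L) (reverseSteps x L) :=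
  ⟨h.1.reverse, by simpa [support_reverseSteps] using h.2⟩

theorem IsPath.tail (h : IsPath G x ((a, y) :: L)) : IsPath G y L :=
  ⟨h.1.2, h.2.of_cons⟩

theorem IsPath.left_of_append (h : IsPath G x (L ++ M)) : IsPath G x L :=
  ⟨(isWalk_append.1 h.1).1, (support_append ▸ h.2).sublist (List.sublist_append_left _ _)⟩

theorem isPath_append_singleton :
    IsPath G x (L ++ [(a, y)]) ↔ IsPath G x L ∧ (G a).Adj (endpoint x L) y ∧ y ∉ support x L := by
  simp only [IsPath, isWalk_append, support_append, List.nodup_append, isWalk_cons, isWalk_nil,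
    and_true, List.map_cons, List.map_nil, List.nodup_singleton, List.mem_singleton, true_and]
  grind

theorem exists_eq_append_of_mem_support (h : y ∈ support x L) :
    ∃ L₁ L₂, L = L₁ ++ L₂ ∧ endpoint x L₁ = y := by
  rcases List.mem_cons.1 h with rfl | h
  · exact ⟨[], L, rfl, rfl⟩
  · obtain ⟨⟨a, y⟩, hmem, rfl⟩ := List.mem_map.1 h
    obtain ⟨s, t, rfl⟩ := List.append_of_mem hmem
    exact ⟨s ++ [(a, y)], t, by simp, by simp [endpoint_append]⟩

theorem endpoint_mem_map_snd (hM : M ≠ []) : endpoint x M ∈ M.map Prod.snd := by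
  rw [endpoint, List.getLastD_eq_getLast?, List.getLast?_eq_some_getLast (by simpa using hM)]
  exact List.getLast_mem _

theorem endpoint_append_not_mem_support (h : (support x (L ++ M)).Nodup) (hM : M ≠ []) :
    endpoint x (L ++ M) ∉ support x L := by
  rw [support_append, List.nodup_append] at h
  exact fun hmem => h.2.2 _ hmem _ (endpoint_append ▸ endpoint_mem_map_snd hM) rfl

def ofFnSteps {k : ℕ} (v : Fin (k + 1) → V) (c : Fin k → σ) : List (σ × V) :=
  List.ofFn fun i => (c i, v i.succ)

section ofFnSteps

variable {k : ℕ} {v : Fin (k + 1) → V} {c : Fin k → σ}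

theorem support_ofFnSteps : support (v 0) (ofFnSteps v c) = List.ofFn v := by
  simp [support, ofFnSteps, List.ofFn_succ, Function.comp_def]

theorem map_fst_ofFnSteps : (ofFnSteps v c).map Prod.fst = List.ofFn c := by
  simp [ofFnSteps, Function.comp_def]

theorem endpoint_ofFnSteps : endpoint (v 0) (ofFnSteps v c) = v (Fin.last k) := by
  rw [← getLast_support]
  simp_rw [support_ofFnSteps, List.getLast_ofFn]
  rfl

theorem isWalk_ofFnSteps :
    IsWalk G (v 0) (ofFnSteps v c) ↔ ∀ i, (G (c i)).Adj (v i.castSucc) (v i.succ) := by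
  induction k with
  | zero => simp [ofFnSteps]
  | succ k ih =>
    simp only [ofFnSteps, List.ofFn_succ, isWalk_cons, Fin.forall_fin_succ] at ih ⊢
    rw [ih (v := fun i => v i.succ) (c := fun i => c i.succ)]
    rfl

theorem isPCPath_iff :
    IsPCPath G k v c ↔ IsPath G (v 0) (ofFnSteps v c) ∧ (List.ofFn c).IsChain (· ≠ ·) := by
  rw [IsPCPath, IsPath, isWalk_ofFnSteps, support_ofFnSteps, List.nodup_ofFn, List.isChain_ofFn]
  constructor
  · rintro ⟨hinj, hadj, hc⟩
    exact ⟨⟨hadj, hinj⟩, fun i hi => hc _ _ rfl⟩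
  · rintro ⟨⟨hadj, hinj⟩, hc⟩
    refine ⟨hinj, hadj, fun i j hij => ?_⟩
    obtain ⟨j, hj⟩ := j
    subst hij
    exact hc i hj

end ofFnSteps

theorem exists_eq_ofFnSteps (x : V) (L : List (σ × V)) :
    ∃ (k : ℕ) (v : Fin (k + 1) → V) (c : Fin k → σ), v 0 = x ∧ L = ofFnSteps v c :=
  ⟨L.length, Fin.cons x fun i => L[i].2, fun i => L[i].1, rfl, by simp [ofFnSteps]⟩

def HasPCPath (G : σ → SimpleGraph V) (x y : V) (a b : σ) : Prop :=
  ∃ L : List (σ × V), IsPath G x L ∧ (L.map Prod.fst).IsChain (· ≠ ·) ∧ endpoint x L = y ∧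
    (L.map Prod.fst).head? = some a ∧ (L.map Prod.fst).getLast? = some b

theorem hasPCPath_iff : HasPCPath G x y a b ↔
    ∃ (k : ℕ) (hk : 0 < k) (v : Fin (k + 1) → V) (c : Fin k → σ), IsPCPath G k v c ∧
      v 0 = x ∧ v (Fin.last k) = y ∧ c ⟨0, hk⟩ = a ∧ c ⟨k - 1, Nat.sub_lt hk Nat.one_pos⟩ = b := by
  constructor
  · rintro ⟨L, hL, hc, rfl, ha, hb⟩
    obtain ⟨k, v, c, rfl, rfl⟩ := exists_eq_ofFnSteps x L
    rw [map_fst_ofFnSteps] at hc ha hb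
    have hk : 0 < k := Nat.pos_of_ne_zero fun hk => by subst hk; simp at ha
    refine ⟨k, hk, v, c, isPCPath_iff.2 ⟨hL, hc⟩, rfl, endpoint_ofFnSteps.symm, ?_, ?_⟩
    · simpa [List.head?_eq_getElem?, hk] using ha
    · simpa [List.getLast?_eq_getElem?, hk] using hb
  · rintro ⟨k, hk, v, c, hvc, rfl, rfl, rfl, rfl⟩
    refine ⟨ofFnSteps v c, ?_⟩
    rw [isPCPath_iff] at hvc
    simp [hvc, endpoint_ofFnSteps, map_fst_ofFnSteps, List.head?_eq_getElem?,
      List.getLast?_eq_getElem?, hk]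

theorem colourConn_iff : ColourConn G x y ↔ ∃ a₁ b₁ a₂ b₂,
    HasPCPath G x y a₁ b₁ ∧ HasPCPath G x y a₂ b₂ ∧ a₁ ≠ a₂ ∧ b₁ ≠ b₂ := by
  simp only [hasPCPath_iff]
  constructor
  · rintro ⟨k₁, k₂, h₁, h₂, v₁, c₁, v₂, c₂, hp₁, hp₂, hx₁, hy₁, hx₂, hy₂, ha, hb⟩
    exact ⟨_, _, _, _, ⟨k₁, h₁, v₁, c₁, hp₁, hx₁, hy₁, rfl, rfl⟩,
      ⟨k₂, h₂, v₂, c₂, hp₂, hx₂, hy₂, rfl, rfl⟩, ha, hb⟩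
  · rintro ⟨_, _, _, _, ⟨k₁, h₁, v₁, c₁, hp₁, hx₁, hy₁, rfl, rfl⟩,
      ⟨k₂, h₂, v₂, c₂, hp₂, hx₂, hy₂, rfl, rfl⟩, ha, hb⟩
    exact ⟨k₁, k₂, h₁, h₂, v₁, c₁, v₂, c₂, hp₁, hp₂, hx₁, hy₁, hx₂, hy₂, ha, hb⟩

theorem HasPCPath.reverse : HasPCPath G x y a b → HasPCPath G y x b a := by
  rintro ⟨L, hL, hc, rfl, ha, hb⟩
  refine ⟨reverseSteps x L, hL.reverse, ?_, endpoint_reverseSteps, ?_, ?_⟩ <;>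
    rw [map_fst_reverseSteps]
  · exact List.isChain_reverse.2 (hc.imp fun _ _ => Ne.symm)
  · rwa [List.head?_reverse]
  · rwa [List.getLast?_reverse]

theorem symm (h : ColourConn G x y) : ColourConn G y x := by
  obtain ⟨a₁, b₁, a₂, b₂, h₁, h₂, ha, hb⟩ := colourConn_iff.1 h
  exact colourConn_iff.2 ⟨b₁, a₁, b₂, a₂, h₁.reverse, h₂.reverse, hb, ha⟩

-- `(e :: L.map Prod.fst).IsChain (· ≠ ·)` says that `L` is properly coloured and does not start
-- in colour `e`.
def PCPathsStartWith (G : σ → SimpleGraph V) (x z : V) (e : σ) : Prop :=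
  ∀ L, IsPath G x L → endpoint x L = z → ¬ (e :: L.map Prod.fst).IsChain (· ≠ ·)

namespace PCPathsStartWith

variable {e : σ} {T T₁ T₂ : List (σ × V)}

theorem getLast?_eq (h : PCPathsStartWith G x z e) (hT : IsPath G x T) (hzT : z ∉ support x T)
    (hc : (e :: T.map Prod.fst).IsChain (· ≠ ·)) (ha : (G a).Adj (endpoint x T) z) :
    (e :: T.map Prod.fst).getLast? = some a := by
  by_contra hne
  refine h (T ++ [(a, z)]) (isPath_append_singleton.2 ⟨hT, ha, hzT⟩) (by simp [endpoint_append]) ?_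
  rw [List.map_append, ← List.cons_append]
  refine hc.append (List.isChain_singleton a) fun c hc d hd => ?_
  obtain rfl : d = a := by simpa using hd.symm
  exact fun hca => hne (hca ▸ hc)

theorem getLast?_eq_of_chord (hcomplete : ∀ u w : V, u ≠ w → ∃ i, (G i).Adj u w)
    (h : PCPathsStartWith G x z e) (hT : IsPath G x (T₁ ++ T₂)) (hT₂ : T₂ ≠ [])
    (hzT : z ∉ support x (T₁ ++ T₂)) (hc : (e :: (T₁ ++ T₂).map Prod.fst).IsChain (· ≠ ·))
    (ha : (G a).Adj (endpoint x T₁) (endpoint x (T₁ ++ T₂)))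
    (hca : (e :: T₁.map Prod.fst ++ [a]).IsChain (· ≠ ·)) :
    (e :: (T₁ ++ T₂).map Prod.fst).getLast? = some a := by
  set w := endpoint x (T₁ ++ T₂)
  have hwz : w ≠ z := fun hw => hzT (hw ▸ endpoint_mem_support)
  have hzT₁ : z ∉ support x T₁ := fun hz => hzT (support_append ▸ List.mem_append_left _ hz)
  obtain ⟨i, hi⟩ := hcomplete w z hwz
  have hT₁a : IsPath G x (T₁ ++ [(a, w)]) := isPath_append_singleton.2
    ⟨hT.left_of_append, ha, endpoint_append_not_mem_support hT.2 hT₂⟩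
  have hai := h.getLast?_eq hT₁a (by simpa [support_append, hzT₁] using hwz.symm)
    (by simpa using hca) (by simpa [endpoint_append] using hi)
  rw [List.map_append, ← List.cons_append, List.map_singleton, List.getLast?_concat,
    Option.some_inj] at hai
  obtain rfl : a = i := hai
  exact h.getLast?_eq hT hzT hc hi

theorem not_isChain_append (hcomplete : ∀ u w : V, u ≠ w → ∃ i, (G i).Adj u w)
    (h : PCPathsStartWith G x z e) {Q : List (σ × V)} (hT : IsPath G x T)
    (hzT : z ∉ support x T) (hQ : IsPath G (endpoint x T) Q)
    (hQz : endpoint (endpoint x T) Q = z) :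
    ¬ (e :: (T ++ Q).map Prod.fst).IsChain (· ≠ ·) := by
  induction Q generalizing T with
  | nil => exact absurd (hQz ▸ endpoint_mem_support) hzT
  | cons step Q ih =>
    obtain ⟨q, u⟩ := step
    intro hc
    rw [List.map_append, ← List.cons_append] at hc
    have hcT := hc.left_of_append
    have hqQ : (q :: Q.map Prod.fst).IsChain (· ≠ ·) := hc.right_of_append
    have hTq : (e :: T.map Prod.fst).getLast? ≠ some q := fun hq =>
      (List.isChain_append.1 hc).2.2 q hq q rfl rfl
    rw [endpoint_cons] at hQz
    by_cases huz : u = z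
    · exact hTq (h.getLast?_eq hT hzT hcT (huz ▸ hQ.1.1))
    by_cases huT : u ∈ support x T
    · obtain ⟨T₁, T₂, rfl, rfl⟩ := exists_eq_append_of_mem_support huT
      have hzT₁ : z ∉ support x T₁ := fun hz => hzT (support_append ▸ List.mem_append_left _ hz)
      by_cases hc₁ : (e :: (T₁ ++ Q).map Prod.fst).IsChain (· ≠ ·)
      · exact ih hT.left_of_append hzT₁ hQ.tail hQz hc₁
      have hT₂ : T₂ ≠ [] := by
        rintro rfl
        simpa using (List.nodup_cons.1 hQ.2).1
      have hcT₁ : (e :: T₁.map Prod.fst).IsChain (· ≠ ·) := by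
        rw [List.map_append, ← List.cons_append] at hcT
        exact hcT.left_of_append
      rw [List.map_append, ← List.cons_append] at hc₁
      exact hTq (h.getLast?_eq_of_chord hcomplete hT hT₂ hzT hcT hQ.1.1.symm
        (isChain_ne_append_singleton hcT₁ hqQ hc₁))
    · exact ih (T := T ++ [(q, u)]) (isPath_append_singleton.2 ⟨hT, hQ.1.1, huT⟩)
        (by simpa [support_append, Ne.symm huz] using hzT)
        (by simpa [endpoint_append] using hQ.tail) (by simpa [endpoint_append] using hQz)
        (by simpa using hc)

end PCPathsStartWith

theorem exists_isPath_isChain_cons (h : ColourConn G x y) (e : σ) :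
    ∃ L, IsPath G x L ∧ endpoint x L = y ∧ (e :: L.map Prod.fst).IsChain (· ≠ ·) := by
  obtain ⟨a₁, b₁, a₂, b₂, h₁, h₂, ha, -⟩ := colourConn_iff.1 h
  obtain ⟨a, b, ⟨L, hL, hc, rfl, hLa, -⟩, hea⟩ : ∃ a b, HasPCPath G x y a b ∧ e ≠ a := by
    by_cases hea : e = a₁
    exacts [⟨a₂, b₂, h₂, hea ▸ ha⟩, ⟨a₁, b₁, h₁, hea⟩]
  exact ⟨L, hL, rfl, List.isChain_cons.2 ⟨by simpa [hLa], hc⟩⟩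

theorem not_pcPathsStartWith (hcomplete : ∀ u w : V, u ≠ w → ∃ i, (G i).Adj u w)
    (hxy : ColourConn G x y) (hyz : ColourConn G y z) (e : σ) : ¬ PCPathsStartWith G x z e := by
  intro h
  obtain ⟨P, hP, rfl, hcP⟩ := hxy.exists_isPath_isChain_cons e
  have hzP : z ∉ support x P := by
    intro hz
    obtain ⟨P₁, P₂, rfl, hP₁⟩ := exists_eq_append_of_mem_support hz
    rw [List.map_append, ← List.cons_append] at hcP
    exact h P₁ hP.left_of_append hP₁ hcP.left_of_append
  obtain ⟨Q, hQ, hQz, hcQ⟩ :=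
    hyz.exists_isPath_isChain_cons ((e :: P.map Prod.fst).getLast (List.cons_ne_nil _ _))
  refine h.not_isChain_append hcomplete hP hzP hQ hQz ?_
  rw [List.map_append, ← List.cons_append]
  refine hcP.append hcQ.tail fun c hc d hd => ?_
  rw [List.getLast?_eq_some_getLast (List.cons_ne_nil _ _), Option.mem_some_iff] at hc
  exact hc ▸ List.isChain_cons.1 hcQ |>.1 d hd

theorem pcPathsStartWith_of_forall {e : σ} (hxz : x ≠ z)
    (h : ∀ a b, HasPCPath G x z a b → a = e) : PCPathsStartWith G x z e := by
  rintro (_ | ⟨⟨a, u⟩, L⟩) hL hLz hc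
  · exact hxz hLz
  obtain ⟨b, hb⟩ : ∃ b, (((a, u) :: L).map Prod.fst).getLast? = some b :=
    Option.isSome_iff_exists.1 (List.getLast?_isSome.2 (List.cons_ne_nil _ _))
  exact (List.isChain_cons.1 hc).1 a rfl (h a b ⟨_, hL, hc.tail, hLz, rfl, hb⟩).symm

theorem trans (hcomplete : ∀ u w : V, u ≠ w → ∃ i, (G i).Adj u w)
    (hxy : ColourConn G x y) (hyz : ColourConn G y z) (hxz : x ≠ z) : ColourConn G x z := by
  obtain ⟨e, he⟩ := hcomplete x z hxz
  by_contra hxz'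
  have hedge : HasPCPath G x z e e := ⟨[(e, z)], ⟨⟨he, trivial⟩, by simpa [support] using hxz⟩,
    List.isChain_singleton e, rfl, rfl, rfl⟩
  have hpair : ∀ a b a' b', HasPCPath G x z a b → HasPCPath G x z a' b' → a = a' ∨ b = b' := by
    intro a b a' b' h h'
    by_contra! hne
    exact hxz' (colourConn_iff.2 ⟨a, b, a', b', h, h', hne⟩)
  rcases forall_fst_eq_or_forall_snd_eq hedge hpair with hfst | hsnd
  · exact not_pcPathsStartWith hcomplete hxy hyz e (pcPathsStartWith_of_forall hxz hfst)
  · exact not_pcPathsStartWith hcomplete hyz.symm hxy.symm e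
      (pcPathsStartWith_of_forall hxz.symm fun a b h => hsnd b a h.reverse)

end ColourConn

theorem colour_connectivity_equivalence_general {V : Type*} (c : ℕ)
    (G : Fin c → SimpleGraph V)
    (hcomplete : ∀ x y : V, x ≠ y → ∃ i, (G i).Adj x y) :
    Equivalence (fun x y : V => x = y ∨ ColourConn G x y) := by
  refine ⟨fun _ => Or.inl rfl, ?_, ?_⟩
  · rintro x y (rfl | h)
    exacts [Or.inl rfl, Or.inr h.symm]
  · rintro x y z (rfl | hxy) (rfl | hyz)
    · exact Or.inl rfl
    · exact Or.inr hyz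
    · exact Or.inr hxy
    · by_cases hxz : x = z
      exacts [Or.inl hxz, Or.inr (ColourConn.trans hcomplete hxy hyz hxz)]

/-- Colour-connectivity (with each vertex colour-connected to itself) is an equivalence
relation on the vertex set of a `c`-edge-coloured complete graph `K^c_n`. -/
theorem colour_connectivity_equivalence {V : Type*} [Fintype V] (c : ℕ)
    (G : Fin c → SimpleGraph V)
    (hsimple : ∀ (i j : Fin c) (x y : V), (G i).Adj x y → (G j).Adj x y → i = j)
    (hcomplete : ∀ x y : V, x ≠ y → ∃ i, (G i).Adj x y) :
    Equivalence (fun x y : V => x = y ∨ ColourConn G x y) :=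
  colour_connectivity_equivalence_general c G hcomplete
end

section
/- If the number of colours c satisfies c ≥ (n−1)(n−2)/2 + 2, then every c-edge-coloured complete graph K^c_n in which all c colours are used has a properly coloured Hamilton cycle. -/
def Fin.cyclicSucc {k : ℕ} (i : Fin k) : Fin k :=
  ⟨(i.val + 1) % k, Nat.mod_lt _ (Nat.lt_of_le_of_lt (Nat.zero_le _) i.isLt)⟩

def IsPCCycle {V σ : Type*} (G : σ → SimpleGraph V) (k : ℕ)
    (v : Fin k → V) (col : Fin k → σ) : Prop :=
  2 ≤ k ∧ Function.Injective v ∧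
    (∀ i : Fin k, (G (col i)).Adj (v i) (v i.cyclicSucc)) ∧
    ∀ i : Fin k, col i ≠ col i.cyclicSucc

/-!
Read a bijection `Fin n ≃ V` as a Hamilton cycle. It fails to be properly coloured only if
some three consecutive vertices `u v w` form a monochromatic path, and a given path sits at a
given position in `(n - 3)!` bijections; so fewer than `(n - 1)(n - 2)` monochromatic paths
leave a good one among the `n!` bijections. With `R = C(n, 2) - c ≤ n - 3` surplus edges, every
colour class has at most `R + 1` edges, so the monochromatic paths, which inject into ordered
pairs of distinct edges of equal colour, number at most `(R + 1) R ≤ (n - 2)(n - 3)`.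
-/

open Finset

namespace Fin

variable {k : ℕ}

theorem val_cyclicSucc (i : Fin k) :
    i.cyclicSucc.val = if i.val + 1 = k then 0 else i.val + 1 := by
  have := i.isLt
  split_ifs with h
  · simp [cyclicSucc, h]
  · exact Nat.mod_eq_of_lt (by omega)

theorem cyclicSucc_ne_self (hk : 2 ≤ k) (i : Fin k) : i.cyclicSucc ≠ i := by
  have := i.isLt
  have h := val_cyclicSucc i
  intro heq
  rw [heq] at h
  split_ifs at h <;> omega

theorem cyclicSucc_cyclicSucc_ne_self (hk : 3 ≤ k) (i : Fin k) :
    i.cyclicSucc.cyclicSucc ≠ i := by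
  have := i.isLt
  have h₁ := val_cyclicSucc i
  have h₂ := val_cyclicSucc i.cyclicSucc
  intro heq
  rw [heq] at h₂
  split_ifs at h₁ h₂ <;> omega

end Fin

theorem Nat.mul_mul_factorial_sub_three_lt_factorial {n m : ℕ} (hn : 3 ≤ n)
    (hm : m < (n - 1) * (n - 2)) : n * (m * (n - 3).factorial) < n.factorial := by
  obtain ⟨k, rfl⟩ : ∃ k, n = k + 3 := ⟨n - 3, by omega⟩
  simp only [Nat.factorial_succ, Nat.add_sub_cancel, show k + 3 - 1 = k + 2 by omega,
    show k + 3 - 2 = k + 1 by omega] at hm ⊢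
  rw [← mul_assoc (k + 2)]
  exact Nat.mul_lt_mul_of_pos_left (Nat.mul_lt_mul_of_pos_right hm k.factorial_pos) (by omega)

theorem Nat.three_le_and_choose_two_sub_mul_lt {n c : ℕ} (hc : (n - 1) * (n - 2) / 2 + 2 ≤ c)
    (hcn : c ≤ n.choose 2) :
    3 ≤ n ∧ (n.choose 2 - c + 1) * (n.choose 2 - c) < (n - 1) * (n - 2) := by
  obtain _ | m := n
  · simp at hcn; omega
  rw [Nat.choose_succ_succ', Nat.choose_one_right, Nat.choose_two_right] at hcn ⊢
  simp only [Nat.add_sub_cancel, show m + 1 - 2 = m - 1 by omega] at hc ⊢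
  refine ⟨by omega, ?_⟩
  calc (m + m * (m - 1) / 2 - c + 1) * (m + m * (m - 1) / 2 - c)
      ≤ (m - 1) * (m - 2) := Nat.mul_le_mul (by omega) (by omega)
    _ < (m - 1) * m := Nat.mul_lt_mul_of_pos_left (by omega) (by omega)
    _ = m * (m - 1) := mul_comm _ _

theorem card_filter_offDiag_apply_eq_le {α σ : Type*} [DecidableEq α] [DecidableEq σ]
    (s : Finset α) (φ : α → σ) :
    #{p ∈ s.offDiag | φ p.1 = φ p.2} ≤ (#s - #(s.image φ) + 1) * (#s - #(s.image φ)) := by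
  set fibre : σ → Finset α := fun k => {x ∈ s | φ x = k}
  set R := #s - #(s.image φ)
  have hfibre_pos : ∀ k ∈ s.image φ, 1 ≤ #(fibre k) := by
    intro k hk
    obtain ⟨x, hx, rfl⟩ := mem_image.1 hk
    exact card_pos.2 ⟨x, mem_filter.2 ⟨hx, rfl⟩⟩
  have hsum : ∑ k ∈ s.image φ, (#(fibre k) - 1) = R := by
    rw [sum_tsub_distrib _ hfibre_pos, ← card_eq_sum_card_image, sum_const, smul_eq_mul, mul_one]
  have hfibre_le : ∀ k ∈ s.image φ, #(fibre k) ≤ R + 1 := by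
    intro k hk
    have := single_le_sum (fun k _ => Nat.zero_le (#(fibre k) - 1)) hk
    have := hfibre_pos k hk
    omega
  calc #{p ∈ s.offDiag | φ p.1 = φ p.2}
      = ∑ k ∈ s.image φ, #(fibre k).offDiag := by
        rw [card_eq_sum_card_fiberwise (f := fun p => φ p.1) (t := s.image φ)]
        · refine sum_congr rfl fun k _ => congrArg card ?_
          ext ⟨x, y⟩
          simp only [mem_filter, mem_offDiag, fibre]
          grind
        · intro p hp
          exact mem_image_of_mem φ (mem_offDiag.1 (mem_filter.1 hp).1).1
    _ = ∑ k ∈ s.image φ, #(fibre k) * (#(fibre k) - 1) := by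
        simp only [offDiag_card, Nat.mul_sub_one]
    _ ≤ ∑ k ∈ s.image φ, (R + 1) * (#(fibre k) - 1) :=
        sum_le_sum fun k hk => Nat.mul_le_mul_right _ (hfibre_le k hk)
    _ = (R + 1) * R := by rw [← mul_sum, hsum]

namespace Equiv

variable {α β : Type*} [Fintype α] [DecidableEq α] [Fintype β] [DecidableEq β]

theorem card_filter_eqOn (e₀ : α ≃ β) (s : Finset α) :
    #{e : α ≃ β | ∀ x ∈ s, e x = e₀ x} = (Fintype.card α - #s).factorial := by
  calc #{e : α ≃ β | ∀ x ∈ s, e x = e₀ x}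
      = Fintype.card {e : α ≃ β // ∀ x ∈ s, e x = e₀ x} := (Fintype.card_subtype _).symm
    _ = Fintype.card {σ : Perm α // ∀ x, ¬x ∉ s → σ x = x} :=
        Fintype.card_congr <| ((Equiv.refl α).equivCongr e₀.symm).subtypeEquiv fun e => by
          simp [symm_apply_eq]
    _ = Fintype.card (Perm {x // x ∉ s}) :=
        (Fintype.card_congr (Perm.subtypeEquivSubtypePerm _)).symm
    _ = (Fintype.card α - #s).factorial := by
        rw [Fintype.card_perm, Fintype.card_subtype_compl, Fintype.card_coe]

theorem card_filter_apply_three_eq_le {a b c : α} (hab : a ≠ b) (hbc : b ≠ c) (hac : a ≠ c)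
    (t : β × β × β) :
    #{e : α ≃ β | (e a, e b, e c) = t} ≤ (Fintype.card α - 3).factorial := by
  obtain ⟨e₀, he₀⟩ | hempty :=
    ({e : α ≃ β | (e a, e b, e c) = t} : Finset _).eq_empty_or_nonempty.symm
  · rw [(mem_filter.1 he₀).2.symm]
    have hcard : #{a, b, c} = 3 := card_eq_three.2 ⟨a, b, c, hab, hac, hbc, rfl⟩
    calc #{e : α ≃ β | (e a, e b, e c) = (e₀ a, e₀ b, e₀ c)}
        = #{e : α ≃ β | ∀ x ∈ ({a, b, c} : Finset α), e x = e₀ x} := by simp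
      _ ≤ _ := by rw [e₀.card_filter_eqOn, hcard]
  · simp [hempty]

theorem card_filter_apply_three_mem_le {a b c : α} (hab : a ≠ b) (hbc : b ≠ c) (hac : a ≠ c)
    (T : Finset (β × β × β)) :
    #{e : α ≃ β | (e a, e b, e c) ∈ T} ≤ #T * (Fintype.card α - 3).factorial := by
  rw [mul_comm]
  refine card_le_mul_card_image_of_maps_to (f := fun e : α ≃ β => (e a, e b, e c))
    (fun e he => (mem_filter.1 he).2) _ fun t _ => ?_
  refine (card_le_card fun e he => ?_).trans (card_filter_apply_three_eq_le hab hbc hac t)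
  simp only [mem_filter] at he ⊢
  exact ⟨he.1.1, he.2⟩

end Equiv

section MonochromaticPaths

variable {V σ : Type*} [Fintype V] [DecidableEq V] [DecidableEq σ]

def monoTwoPaths (φ : Sym2 V → σ) : Finset (V × V × V) :=
  {t | t.1 ≠ t.2.1 ∧ t.2.1 ≠ t.2.2 ∧ t.1 ≠ t.2.2 ∧ φ s(t.1, t.2.1) = φ s(t.2.1, t.2.2)}

theorem card_monoTwoPaths_le (φ : Sym2 V → σ) :
    #(monoTwoPaths φ) ≤ #{p ∈ (⊤ : SimpleGraph V).edgeFinset.offDiag | φ p.1 = φ p.2} := by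
  refine card_le_card_of_injOn (fun t => (s(t.1, t.2.1), s(t.2.1, t.2.2))) ?_ ?_
  · rintro ⟨u, v, w⟩ ht
    simp only [monoTwoPaths, coe_filter, mem_univ, true_and, Set.mem_ofPred_eq] at ht
    simp [ht]
  · rintro ⟨u, v, w⟩ ht ⟨u', v', w'⟩ ht' h
    simp only [monoTwoPaths, coe_filter, mem_univ, true_and, Set.mem_ofPred_eq] at ht ht'
    simp only [Prod.mk.injEq, Sym2.eq_iff] at h ⊢
    -- the two edges are distinct, so `v` is their only common vertex
    grind

theorem exists_equiv_forall_ne_of_card_monoTwoPaths_lt (φ : Sym2 V → σ)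
    (hn : 3 ≤ Fintype.card V)
    (hmono : #(monoTwoPaths φ) < (Fintype.card V - 1) * (Fintype.card V - 2)) :
    ∃ e : Fin (Fintype.card V) ≃ V, ∀ i,
      φ s(e i, e i.cyclicSucc) ≠ φ s(e i.cyclicSucc, e i.cyclicSucc.cyclicSucc) := by
  set n := Fintype.card V
  set bad : Finset (Fin n ≃ V) :=
    {e | ∃ i, φ s(e i, e i.cyclicSucc) = φ s(e i.cyclicSucc, e i.cyclicSucc.cyclicSucc)}
  set badAt : Fin n → Finset (Fin n ≃ V) := fun i =>
    {e | (e i, e i.cyclicSucc, e i.cyclicSucc.cyclicSucc) ∈ monoTwoPaths φ}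
  have hcover : bad ⊆ univ.biUnion badAt := by
    intro e he
    obtain ⟨i, hi⟩ := (mem_filter.1 he).2
    refine mem_biUnion.2 ⟨i, mem_univ i, mem_filter.2 ⟨mem_univ e, ?_⟩⟩
    simp only [monoTwoPaths, mem_filter, mem_univ, true_and, e.injective.ne_iff]
    exact ⟨(Fin.cyclicSucc_ne_self (by omega) i).symm,
      (Fin.cyclicSucc_ne_self (by omega) i.cyclicSucc).symm,
      (Fin.cyclicSucc_cyclicSucc_ne_self hn i).symm, hi⟩
  have hbadAt : ∀ i, #(badAt i) ≤ #(monoTwoPaths φ) * (n - 3).factorial := by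
    intro i
    have := Equiv.card_filter_apply_three_mem_le (β := V)
      (Fin.cyclicSucc_ne_self (by omega) i).symm
      (Fin.cyclicSucc_ne_self (by omega) i.cyclicSucc).symm
      (Fin.cyclicSucc_cyclicSucc_ne_self hn i).symm (monoTwoPaths φ)
    rwa [Fintype.card_fin] at this
  have hbad : #bad < #(univ : Finset (Fin n ≃ V)) := by
    rw [card_univ, Fintype.card_equiv (Fintype.equivFin V).symm, Fintype.card_fin]
    calc #bad
        ≤ ∑ i, #(badAt i) := (card_le_card hcover).trans card_biUnion_le
      _ ≤ ∑ _ : Fin n, #(monoTwoPaths φ) * (n - 3).factorial := sum_le_sum fun i _ => hbadAt i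
      _ = n * (#(monoTwoPaths φ) * (n - 3).factorial) := by simp
      _ < n.factorial := Nat.mul_mul_factorial_sub_three_lt_factorial hn hmono
  obtain ⟨e, -, he⟩ := exists_mem_notMem_of_card_lt_card hbad
  exact ⟨e, fun i hi => he (mem_filter.2 ⟨mem_univ e, i, hi⟩)⟩

end MonochromaticPaths

section EdgeColour

variable {ι V : Type*} [Nonempty ι] (G : ι → SimpleGraph V)

noncomputable def edgeColour (z : Sym2 V) : ι :=
  Classical.epsilon fun i => z ∈ (G i).edgeSet

theorem adj_edgeColour (hcomplete : ∀ x y, x ≠ y → ∃ i, (G i).Adj x y) {x y : V} (h : x ≠ y) :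
    (G (edgeColour G s(x, y))).Adj x y :=
  Classical.epsilon_spec (hcomplete x y h)

theorem edgeColour_eq (hdisj : ∀ i j x y, (G i).Adj x y → (G j).Adj x y → i = j) {i : ι}
    {x y : V} (h : (G i).Adj x y) : edgeColour G s(x, y) = i :=
  hdisj _ _ x y (Classical.epsilon_spec (p := fun i => s(x, y) ∈ (G i).edgeSet) ⟨i, h⟩) h

end EdgeColour

/-- (Manoussakis, Spyratos, Tuza, Voigt)  If `c ≥ (n−1)(n−2)/2 + 2`, then every
`c`-edge-coloured complete graph `K^c_n` in which all `c` colours are used has a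
properly coloured Hamilton cycle. -/
theorem many_colours_pc_hamilton {V : Type*} [Fintype V] (c : ℕ)
    (G : Fin c → SimpleGraph V)
    (hsimple : ∀ (i j : Fin c) (x y : V), (G i).Adj x y → (G j).Adj x y → i = j)
    (hcomplete : ∀ x y : V, x ≠ y → ∃ i, (G i).Adj x y)
    (hused : ∀ i : Fin c, ∃ x y : V, (G i).Adj x y)
    (hc : (Fintype.card V - 1) * (Fintype.card V - 2) / 2 + 2 ≤ c) :
    ∃ (v : Fin (Fintype.card V) → V) (col : Fin (Fintype.card V) → Fin c),
      IsPCCycle G (Fintype.card V) v col := by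
  classical
  have : Nonempty (Fin c) := ⟨⟨0, by omega⟩⟩
  set E := (⊤ : SimpleGraph V).edgeFinset
  have hcolours : #(E.image (edgeColour G)) = c := by
    have himage : E.image (edgeColour G) = univ := eq_univ_of_forall fun i => by
      obtain ⟨x, y, h⟩ := hused i
      exact mem_image.2 ⟨s(x, y), by simpa [E] using h.ne, edgeColour_eq G hsimple h⟩
    rw [himage, card_univ, Fintype.card_fin]
  have hcE : c ≤ #E := hcolours ▸ card_image_le
  rw [SimpleGraph.card_edgeFinset_top_eq_card_choose_two] at hcE
  obtain ⟨hn, hsurplus⟩ := Nat.three_le_and_choose_two_sub_mul_lt hc hcE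
  have hmono := (card_monoTwoPaths_le (edgeColour G)).trans
    (card_filter_offDiag_apply_eq_le E (edgeColour G))
  rw [hcolours, SimpleGraph.card_edgeFinset_top_eq_card_choose_two] at hmono
  obtain ⟨e, he⟩ :=
    exists_equiv_forall_ne_of_card_monoTwoPaths_lt (edgeColour G) hn (hmono.trans_lt hsurplus)
  refine ⟨e, fun i => edgeColour G s(e i, e i.cyclicSucc), by omega, e.injective, fun i => ?_, he⟩
  exact adj_edgeColour G hcomplete (e.injective.ne (Fin.cyclicSucc_ne_self (by omega) i).symm)
end

section
/- The minimum monochromatic degree threshold d(n,c) forcing a properly coloured cycle satisfies d(n,c) ≥ (log_c n − log_c log_c n)/c for c-edge-coloured graphs; equivalently, for every c ≥ 2 and infinitely many n there exists a c-edge-coloured graph of order n with minimum monochromatic degree at least ⌈(log_c n − log_c log_c n)/c⌉ − 1 and no properly coloured cycle. -/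
/-!
The vertices are words over the alphabet `Fin c` in which every letter occurs at most `d` times,
and `u`, `v` are joined in colour `i` when one of them is `p` and the other is `p ++ i :: t`.
A shortest word `w` on a closed walk is left and re-entered through longer words; every word
further along the walk keeps the prefix `w ++ [a]`, where `a` is the colour of the first edge, so
the walk returns to `w` in colour `a` as well, and the cycle is not properly coloured.
Each word `w` has `count i w` shorter colour-`i` neighbours (one for each occurrence of `i`) and at
least `d - count i w` longer ones `w ++ i :: iᵏ`, so the monochromatic degree is at least `d`,
while there are fewer than `c ^ (c * d + 1)` words, which gives the logarithmic bound.
-/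

open Function

lemma Fin.cyclicSucc_eq_add_one {n : ℕ} (i : Fin (n + 1)) : i.cyclicSucc = i + 1 :=
  Fin.ext (by simp [Fin.cyclicSucc, Fin.val_add])

lemma IsPCCycle.of_comap {V W σ : Type*} {G : σ → SimpleGraph W} {f : V → W} (hf : Injective f)
    {k : ℕ} {v : Fin k → V} {col : Fin k → σ}
    (h : IsPCCycle (fun i => (G i).comap f) k v col) : IsPCCycle G k (f ∘ v) col :=
  ⟨h.1, hf.comp h.2.1, h.2.2.1, h.2.2.2⟩

lemma SimpleGraph.ncard_neighborSet_comap {V W : Type*} {G : SimpleGraph W} {f : V → W}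
    (hf : Injective f) (v : V) :
    ((G.comap f).neighborSet v).ncard = (G.neighborSet (f v) ∩ Set.range f).ncard := by
  rw [← Set.ncard_preimage_of_injective_subset_range hf Set.inter_subset_right,
    Set.preimage_inter_range]
  rfl

lemma Real.natCeil_logb_sub_logb_logb_div_sub_one_le {b x : ℝ} {d : ℕ} (hb : 1 < b)
    (hbx : b ≤ x) (hx : logb b x ≤ b * (d + 1)) :
    ⌈(logb b x - logb b (logb b x)) / b⌉₊ - 1 ≤ d := by
  have hlog : 1 ≤ logb b x := by
    simpa [logb_self_eq_one hb] using logb_le_logb_of_le hb (by linarith) hbx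
  have hloglog : 0 ≤ logb b (logb b x) := logb_nonneg hb hlog
  have : (logb b x - logb b (logb b x)) / b ≤ ((d + 1 : ℕ) : ℝ) := by
    rw [div_le_iff₀ (by linarith)]
    push_cast
    linarith
  have := Nat.ceil_le.mpr this
  omega

lemma ncard_setOf_length_le_lt {α : Type*} [Fintype α] (h : 2 ≤ Fintype.card α) (m : ℕ) :
    {l : List α | l.length ≤ m}.ncard < Fintype.card α ^ (m + 1) := by
  let toSigma : {l : List α | l.length ≤ m} → Σ j : Fin (m + 1), List.Vector α j :=
    fun l => ⟨⟨l.1.length, Nat.lt_succ_of_le l.2⟩, ⟨l.1, rfl⟩⟩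
  have hinj : Injective toSigma := fun l l' h =>
    Subtype.ext (congrArg (fun s => s.2.toList) h)
  calc {l : List α | l.length ≤ m}.ncard ≤ Nat.card (Σ j : Fin (m + 1), List.Vector α j) :=
        Nat.card_le_card_of_injective _ hinj
    _ = ∑ j ∈ Finset.range (m + 1), Fintype.card α ^ j := by
      rw [Nat.card_eq_fintype_card, Fintype.card_sigma]
      simp only [card_vector]
      exact Fin.sum_univ_eq_sum_range (Fintype.card α ^ ·) _
    _ < _ := Nat.geomSum_lt h fun j hj => by simpa using hj

variable {α : Type*}

def wordGraph (i : α) : SimpleGraph (List α) where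
  Adj u v := (∃ t, v = u ++ i :: t) ∨ ∃ t, u = v ++ i :: t
  symm := ⟨fun _ _ => Or.symm⟩
  loopless := ⟨fun _ h => by rcases h with ⟨t, h⟩ | ⟨t, h⟩ <;> simpa using congrArg List.length h⟩

namespace wordGraph

variable {i j : α} {u v : List α}

lemma adj_iff : (wordGraph i).Adj u v ↔ (∃ t, v = u ++ i :: t) ∨ ∃ t, u = v ++ i :: t := Iff.rfl

lemma exists_eq_append_cons_of_adj (h : (wordGraph i).Adj u v) (huv : u.length ≤ v.length) :
    ∃ t, v = u ++ i :: t := by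
  rcases adj_iff.mp h with h | ⟨t, rfl⟩
  · exact h
  · simp at huv

lemma eq_of_adj_of_adj (hi : (wordGraph i).Adj u v) (hj : (wordGraph j).Adj u v) : i = j := by
  wlog huv : u.length ≤ v.length generalizing u v
  · exact this hi.symm hj.symm (by omega)
  obtain ⟨t, rfl⟩ := exists_eq_append_cons_of_adj hi huv
  obtain ⟨s, hs⟩ := exists_eq_append_cons_of_adj hj huv
  exact (by simpa using hs : i = j ∧ _).1

lemma prefix_of_adj {w x y : List α} {a : α} (hx : w ++ [a] <+: x) (h : (wordGraph i).Adj x y)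
    (hwy : w.length ≤ y.length) (hy : y ≠ w) : w ++ [a] <+: y := by
  rcases adj_iff.mp h with ⟨t, rfl⟩ | ⟨t, rfl⟩
  · exact hx.trans (List.prefix_append _ _)
  · have hyx : y <+: y ++ i :: t := List.prefix_append _ _
    by_cases hlen : (w ++ [a]).length ≤ y.length
    · exact List.prefix_of_prefix_length_le hx hyx hlen
    · have hwx := (List.prefix_append w [a]).trans hx
      simp only [List.length_append, List.length_singleton] at hlen
      exact absurd ((List.prefix_of_prefix_length_le hyx hwx (by omega)).eq_of_length
        (by omega)) hy

lemma color_eq_of_closedWalk {k : ℕ} (hk : 2 ≤ k) (U : ℕ → List α) (C : ℕ → α)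
    (hadj : ∀ m < k, (wordGraph (C m)).Adj (U m) (U (m + 1))) (hclosed : U k = U 0)
    (hshortest : ∀ m, (U 0).length ≤ (U m).length) (hne : ∀ m, 0 < m → m < k → U m ≠ U 0) :
    C (k - 1) = C 0 := by
  have hpath : ∀ m, 1 ≤ m → m < k → U 0 ++ [C 0] <+: U m := by
    intro m hm hmk
    induction m, hm using Nat.le_induction with
    | base =>
      obtain ⟨t, ht⟩ := exists_eq_append_cons_of_adj (hadj 0 (by omega)) (hshortest 1)
      exact ⟨t, by simp [ht]⟩
    | succ m hm ih =>
      exact prefix_of_adj (ih (by omega)) (hadj m (by omega)) (hshortest _) (hne _ (by omega) hmk)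
  have hlast := hadj (k - 1) (by omega)
  rw [Nat.sub_add_cancel (by omega), hclosed] at hlast
  obtain ⟨s, hs⟩ := exists_eq_append_cons_of_adj hlast.symm (hshortest _)
  have := hpath (k - 1) (by omega) (by omega)
  rw [hs, List.prefix_append_right_inj] at this
  obtain ⟨_, h⟩ := this
  exact (by simpa using h.symm : _ ∧ _).1

open Fin.NatCast in
theorem not_isPCCycle {k : ℕ} (u : Fin k → List α) (col : Fin k → α) :
    ¬ IsPCCycle wordGraph k u col := by
  rintro ⟨hk, hinj, hadj, hcol⟩
  obtain ⟨n, rfl⟩ : ∃ n, k = n + 1 := ⟨k - 1, by omega⟩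
  obtain ⟨j, hj⟩ := Finite.exists_min fun j => (u j).length
  have hstep : ∀ m : ℕ, j + ((m + 1 : ℕ) : Fin (n + 1)) = (j + (m : Fin (n + 1))).cyclicSucc := by
    intro m; rw [Fin.cyclicSucc_eq_add_one, Nat.cast_succ, add_assoc]
  have key := color_eq_of_closedWalk hk (fun m => u (j + (m : Fin (n + 1))))
    (fun m => col (j + (m : Fin (n + 1))))
    (fun m _ => by simpa only [hstep] using hadj (j + (m : Fin (n + 1)))) (by simp)
    (fun m => by simpa using hj (j + (m : Fin (n + 1))))
    (fun m hm hmk h => by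
      have := (Fin.natCast_eq_zero (n := n + 1)).mp (by simpa using hinj h)
      exact absurd (Nat.le_of_dvd hm this) (by omega))
  have hlast := hcol (j + (n : Fin (n + 1)))
  rw [← hstep, Fin.natCast_self] at hlast
  exact hlast (by simpa using key)

end wordGraph

variable [DecidableEq α]

def cappedWords (α : Type*) [DecidableEq α] (d : ℕ) : Set (List α) := {l | ∀ a, l.count a ≤ d}

lemma encard_setOf_eq_append_cons (i : α) (w : List α) :
    {p | ∃ t, w = p ++ i :: t}.encard = w.count i := by
  induction w with
  | nil => simp
  | cons a w ih =>
    have hcons : {p | ∃ t, a :: w = p ++ i :: t} =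
        (if a = i then {[]} else ∅) ∪ List.cons a '' {p | ∃ t, w = p ++ i :: t} := by
      ext (_ | ⟨b, p⟩) <;> by_cases h : a = i <;> simp [h, eq_comm, and_comm, Ne.symm]
    rw [hcons, Set.encard_union_eq, (List.cons_injective).encard_image, ih, List.count_cons]
    · split_ifs with h <;> simp_all [add_comm]
    · split_ifs <;> simp

namespace cappedWords

variable {d : ℕ} {w : List α}

lemma mem_of_prefix {p : List α} (hw : w ∈ cappedWords α d) (hp : p <+: w) :
    p ∈ cappedWords α d :=
  fun a => (hp.sublist.count_le a).trans (hw a)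

lemma length_le [Fintype α] (hw : w ∈ cappedWords α d) : w.length ≤ Fintype.card α * d := by
  calc w.length = ∑ a, w.count a := by
        simpa using (Multiset.sum_count_eq_card (s := Finset.univ) (m := (w : Multiset α))
          (by simp)).symm
    _ ≤ ∑ _a : α, d := Finset.sum_le_sum fun a _ => hw a
    _ = Fintype.card α * d := by simp

lemma finite [Fintype α] : (cappedWords α d).Finite :=
  (List.finite_length_le α _).subset fun _ => length_le

lemma ncard_lt [Fintype α] (h : 2 ≤ Fintype.card α) :
    (cappedWords α d).ncard < Fintype.card α ^ (Fintype.card α * d + 1) :=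
  (Set.ncard_le_ncard (fun _ => length_le) (List.finite_length_le α _)).trans_lt
    (ncard_setOf_length_le_lt h _)

lemma lt_ncard [Fintype α] [Nonempty α] (d : ℕ) : d < (cappedWords α d).ncard := by
  obtain ⟨a⟩ := ‹Nonempty α›
  have hsub : (fun j => List.replicate j a) '' Set.Iic d ⊆ cappedWords α d := by
    rintro _ ⟨j, hj, rfl⟩ b
    rw [List.count_replicate]
    split_ifs <;> simp_all
  have := Set.ncard_le_ncard hsub finite
  rwa [Set.ncard_image_of_injective _ fun j j' h => by simpa using congrArg List.length h,
    Set.ncard_Iic_nat] at this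

lemma le_encard_neighborSet_inter (hw : w ∈ cappedWords α d) (i : α) :
    (d : ℕ∞) ≤ ((wordGraph i).neighborSet w ∩ cappedWords α d).encard := by
  let lower : Set (List α) := {p | ∃ t, w = p ++ i :: t}
  let upper : Finset (List α) :=
    (Finset.range (d - w.count i)).image fun j => w ++ i :: List.replicate j i
  have hlower : lower ⊆ (wordGraph i).neighborSet w ∩ cappedWords α d := by
    rintro p ⟨t, rfl⟩
    exact ⟨Or.inr ⟨t, rfl⟩, mem_of_prefix hw (List.prefix_append _ _)⟩
  have hupper : ↑upper ⊆ (wordGraph i).neighborSet w ∩ cappedWords α d := by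
    intro p hp
    obtain ⟨j, hj, rfl⟩ := Finset.mem_image.mp hp
    refine ⟨Or.inl ⟨_, rfl⟩, fun a => ?_⟩
    have := hw a
    simp only [Finset.mem_range] at hj
    rw [List.count_append, List.count_cons, List.count_replicate]
    by_cases ha : i = a
    · subst ha; simp; omega
    · simp [ha]; omega
  have hdisj : Disjoint lower ↑upper := by
    rw [Set.disjoint_left]
    rintro p ⟨t, rfl⟩ hp
    obtain ⟨j, -, hj⟩ := Finset.mem_image.mp hp
    simpa using congrArg List.length hj
  have hinj : Injective fun j => w ++ i :: List.replicate j i := fun j j' h => by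
    simpa using congrArg List.length h
  calc (d : ℕ∞) = (w.count i + (d - w.count i) : ℕ) := by rw [Nat.add_sub_cancel' (hw i)]
    _ = lower.encard + (upper : Set (List α)).encard := by
      rw [encard_setOf_eq_append_cons, Set.encard_coe_eq_coe_finsetCard,
        Finset.card_image_of_injective _ hinj, Finset.card_range, Nat.cast_add]
    _ = (lower ∪ upper).encard := (Set.encard_union_eq hdisj).symm
    _ ≤ _ := Set.encard_le_encard (Set.union_subset hlower hupper)

lemma le_ncard_neighborSet_inter [Fintype α] (hw : w ∈ cappedWords α d) (i : α) :
    d ≤ ((wordGraph i).neighborSet w ∩ cappedWords α d).ncard := by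
  have := le_encard_neighborSet_inter hw i
  rw [← (finite.subset Set.inter_subset_right).cast_ncard_eq] at this
  exact_mod_cast this

end cappedWords

/-- (Gutin)  The threshold `d(n,c)` satisfies `d(n,c) ≥ (log_c n − log_c log_c n)/c`:
for every `c ≥ 2` and infinitely many `n` there exists a `c`-edge-coloured graph of
order `n` with minimum monochromatic degree at least
`⌈(log_c n − log_c log_c n)/c⌉ − 1` and no properly coloured cycle. -/
theorem lower_bound_pc_cycle_threshold (c : ℕ) (hc : 2 ≤ c) (N : ℕ) :
    ∃ n : ℕ, N ≤ n ∧
      ∃ G : Fin c → SimpleGraph (Fin n),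
        (∀ (i j : Fin c) (x y : Fin n), (G i).Adj x y → (G j).Adj x y → i = j) ∧
        (∀ (v : Fin n) (i : Fin c),
          ⌈(Real.logb c n - Real.logb c (Real.logb c n)) / c⌉₊ - 1 ≤
            ((G i).neighborSet v).ncard) ∧
        ¬ ∃ (k : ℕ) (v : Fin k → Fin n) (col : Fin k → Fin c),
          IsPCCycle G k v col := by
  set d := max N c
  let W := cappedWords (Fin c) d
  have : Nonempty (Fin c) := ⟨⟨0, by omega⟩⟩
  have : Finite W := cappedWords.finite.to_subtype
  let f : Fin (Nat.card W) → List (Fin c) := Subtype.val ∘ (Finite.equivFin W).symm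
  have hf : Injective f := Subtype.val_injective.comp (Equiv.injective _)
  have hlower : d < Nat.card W := cappedWords.lt_ncard d
  have hupper : Nat.card W < c ^ (c * d + 1) := by
    simpa using cappedWords.ncard_lt (α := Fin c) (d := d) (by simpa)
  refine ⟨Nat.card W, by omega, fun i => (wordGraph i).comap f,
    fun i j x y => wordGraph.eq_of_adj_of_adj, fun x i => ?_,
    fun ⟨k, v, col, h⟩ => wordGraph.not_isPCCycle _ _ (h.of_comap hf)⟩
  rw [SimpleGraph.ncard_neighborSet_comap hf, EquivLike.range_comp, Subtype.range_coe]
  refine le_trans ?_ (cappedWords.le_ncard_neighborSet_inter ((Finite.equivFin W).symm x).2 i)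
  have hc1 : (1 : ℝ) < c := by exact_mod_cast hc
  refine Real.natCeil_logb_sub_logb_logb_div_sub_one_le hc1 (by exact_mod_cast (by omega)) ?_
  calc Real.logb c (Nat.card W) ≤ Real.logb c ((c ^ (c * d + 1) : ℕ) : ℝ) :=
        Real.logb_le_logb_of_le hc1 (by exact_mod_cast (by omega)) (by exact_mod_cast hupper.le)
    _ = c * d + 1 := by
      push_cast
      rw [Real.logb_pow, Real.logb_self_eq_one hc1]
      push_cast
      ring
    _ ≤ c * (d + 1) := by nlinarith
end
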